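/- arXiv:2412.14975 — 2 statements merged into one kernel-verified Lean document; each statement's English description precedes it below -/
import Mathlib

section
/- The reduced-interface device RID accepts exactly the language L(N) of the NFA N: for every string x and every segmentation of x into chunks, the join-phase acceptance condition of the RID holds if and only if x ∈ L(N). In particular the accepted language is independent of the chosen segmentation. -/
/-- One-step determinized (subset) transition of an NFA: `δ^B(S,a) = ⋃_{q∈S} ρ(q,a)`.
    The empty set plays the role of "undefined". -/
def dTrans {Q σ : Type*} (ρ : Q → σ → Set Q) (S : Set Q) (a : σ) : Set Q :=
  ⋃ q ∈ S, ρ q a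

/-- Determinized transition extended to strings: `δ^B*(S,x)`. -/
def dRun {Q σ : Type*} (ρ : Q → σ → Set Q) (S : Set Q) (x : List σ) : Set Q :=
  x.foldl (dTrans ρ) S

/-- NFA transition relation extended to strings, by recursion on the string: `ρ*(q,x)`. -/
def nRun {Q σ : Type*} (ρ : Q → σ → Set Q) : Q → List σ → Set Q
  | q, [] => {q}
  | q, a :: x => ⋃ q' ∈ ρ q a, nRun ρ q' x

/-- The interface function `φ`: maps a set of subset-states to the set of
    singletons of their member NFA states. -/
def phi {Q : Type*} (P : Set (Set Q)) : Set (Set Q) :=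
  ⋃ p ∈ P, {s | ∃ q ∈ p, s = {q}}

/-- One chunk-processing step of the RID join computation:
    `PLAS_i = { δ^B(s, y_i) : s ∈ φ(PLAS_{i-1}) ∩ PIS_i }`,
    where `PIS_i` keeps exactly the singletons on which the run is defined. -/
def riStep {Q σ : Type*} (ρ : Q → σ → Set Q) (P : Set (Set Q)) (y : List σ) : Set (Set Q) :=
  (fun s => dRun ρ s y) '' {s ∈ phi P | dRun ρ s y ≠ ∅}

/-- The sets `PLAS_i` computed chunk by chunk; `plas ρ q0 [y_1, …, y_c] = PLAS_c`.
    (Note `phi {{q0}} = {{q0}}`, so the first step is `PLAS_1 = {δ^B({q0},y_1)}` when defined.) -/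
def plas {Q σ : Type*} (ρ : Q → σ → Set Q) (q0 : Q) (ys : List (List σ)) : Set (Set Q) :=
  ys.foldl (riStep ρ) {{q0}}

/-- The language of the NFA `N`. -/
def nfaLang {Q σ : Type*} (ρ : Q → σ → Set Q) (q0 : Q) (F : Set Q) : Set (List σ) :=
  {x | (nRun ρ q0 x ∩ F).Nonempty}

lemma dRun_eq {Q σ : Type*} (ρ : Q → σ → Set Q) (x : List σ) :
    ∀ S : Set Q, dRun ρ S x = ⋃ q ∈ S, nRun ρ q x := by
  induction x with
  | nil => intro S; simp [dRun, nRun]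
  | cons a x ih =>
    intro S
    show dRun ρ (dTrans ρ S a) x = _
    rw [ih]
    ext r
    simp only [dTrans, nRun, Set.mem_iUnion, exists_prop]
    tauto

lemma nRun_append {Q σ : Type*} (ρ : Q → σ → Set Q) (x y : List σ) :
    ∀ q : Q, nRun ρ q (x ++ y) = ⋃ q' ∈ nRun ρ q x, nRun ρ q' y := by
  induction x with
  | nil => intro q; simp [nRun]
  | cons a x ih =>
    intro q
    show (⋃ q' ∈ ρ q a, nRun ρ q' (x ++ y)) = ⋃ q'' ∈ ⋃ q' ∈ ρ q a, nRun ρ q' x, nRun ρ q'' y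
    simp only [ih]
    ext r
    simp only [Set.mem_iUnion, exists_prop]
    constructor
    · rintro ⟨q1, h1, q2, h2, hr⟩
      exact ⟨q2, ⟨q1, h1, h2⟩, hr⟩
    · rintro ⟨q2, ⟨q1, h1, h2⟩, hr⟩
      exact ⟨q1, h1, q2, h2, hr⟩

lemma sUnion_riStep {Q σ : Type*} (ρ : Q → σ → Set Q) (P : Set (Set Q)) (y : List σ) :
    ⋃₀ riStep ρ P y = ⋃ q ∈ ⋃₀ P, nRun ρ q y := by
  ext r
  constructor
  · rintro ⟨t, ⟨s, ⟨hs, -⟩, rfl⟩, hr⟩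
    simp only [phi, Set.mem_iUnion, Set.mem_setOf_eq, exists_prop] at hs
    obtain ⟨p, hp, q, hq, rfl⟩ := hs
    change r ∈ dRun ρ {q} y at hr
    rw [dRun_eq] at hr
    simp only [Set.mem_singleton_iff, Set.iUnion_iUnion_eq_left] at hr
    simp only [Set.mem_iUnion, Set.mem_sUnion, exists_prop]
    exact ⟨q, ⟨p, hp, hq⟩, hr⟩
  · rintro hr
    simp only [Set.mem_iUnion, Set.mem_sUnion, exists_prop] at hr
    obtain ⟨q, ⟨p, hp, hq⟩, hr⟩ := hr
    have hd : dRun ρ {q} y = nRun ρ q y := by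
      rw [dRun_eq]
      simp only [Set.mem_singleton_iff, Set.iUnion_iUnion_eq_left]
    refine ⟨dRun ρ {q} y, ⟨{q}, ⟨?_, ?_⟩, rfl⟩, ?_⟩
    · simp only [phi, Set.mem_iUnion, Set.mem_setOf_eq, exists_prop]
      exact ⟨p, hp, q, hq, rfl⟩
    · rw [hd]
      intro h; rw [h] at hr; exact hr
    · rw [hd]; exact hr

lemma sUnion_foldl {Q σ : Type*} (ρ : Q → σ → Set Q) (ys : List (List σ)) :
    ∀ P : Set (Set Q),
      ⋃₀ ys.foldl (riStep ρ) P = ⋃ q ∈ ⋃₀ P, nRun ρ q ys.flatten := by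
  induction ys with
  | nil =>
    intro P
    ext r
    simp [nRun, Set.mem_sUnion]
  | cons y ys ih =>
    intro P
    show ⋃₀ (ys.foldl (riStep ρ) (riStep ρ P y)) = _
    rw [ih, sUnion_riStep]
    ext r
    simp only [List.flatten_cons, Set.mem_iUnion, Set.mem_sUnion, exists_prop, nRun_append]
    constructor
    · rintro ⟨q, ⟨q0, ⟨p, hp, h0⟩, hq⟩, hr⟩
      exact ⟨q0, ⟨p, hp, h0⟩, q, hq, hr⟩
    · rintro ⟨q0, ⟨p, hp, h0⟩, q, hq, hr⟩
      exact ⟨q, ⟨q0, ⟨p, hp, h0⟩, hq⟩, hr⟩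

lemma sUnion_plas {Q σ : Type*} (ρ : Q → σ → Set Q) (q0 : Q) (ys : List (List σ)) :
    ⋃₀ plas ρ q0 ys = nRun ρ q0 ys.flatten := by
  rw [plas, sUnion_foldl]; simp

/-- Theorem, Correctness: for every string `x` and every segmentation of `x`
    into chunks, the RID join-phase acceptance condition holds iff `x ∈ L(N)`; in
    particular the accepted language is independent of the chosen segmentation. -/
theorem rid_correctness {Q σ : Type*} (ρ : Q → σ → Set Q) (q0 : Q) (F : Set Q) :
    ∀ (x : List σ) (ys : List (List σ)), ys.flatten = x →
      1 ≤ ys.length → (∀ y ∈ ys, y ≠ []) →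
      ((plas ρ q0 ys ∩ {p | (p ∩ F).Nonempty}).Nonempty ↔ x ∈ nfaLang ρ q0 F) := by
  intro x ys hflat _ _
  subst hflat
  have key := sUnion_plas ρ q0 ys
  constructor
  · rintro ⟨p, hp, q, hq, hF⟩
    exact ⟨q, key ▸ ⟨p, hp, hq⟩, hF⟩
  · rintro ⟨q, hq, hF⟩
    rw [← key] at hq
    obtain ⟨p, hp, hq⟩ := hq
    exact ⟨p, hp, q, hq, hF⟩
end

section
/- The initial states of B_min are in bijection with the set of languages { L_B({q}) : q ∈ Q_N }, where L_B({q}) is the language accepted starting from singleton {q} in the RI-DFA B; hence |I^{B_min}| = |{ L_N(q) : q ∈ Q_N }| where L_N(q) = { x : ρ*(q,x) ∩ F ≠ ∅ }. -/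
/-- The language accepted from a state `S` of the RI-DFA `B`. -/
def langB {Q σ : Type*} (ρ : Q → σ → Set Q) (F : Set Q) (S : Set Q) : Set (List σ) :=
  {x | (dRun ρ S x ∩ F).Nonempty}

/-- The language `L_N(q)` accepted by the NFA starting at state `q`. -/
def nfaLangFrom {Q σ : Type*} (ρ : Q → σ → Set Q) (F : Set Q) (q : Q) : Set (List σ) :=
  {x | (nRun ρ q x ∩ F).Nonempty}

lemma dRun_eq_biUnion {Q σ : Type*} (ρ : Q → σ → Set Q) :
    ∀ (x : List σ) (S : Set Q), dRun ρ S x = ⋃ q ∈ S, nRun ρ q x := by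
  intro x
  induction x with
  | nil => intro S; simp [dRun, nRun]
  | cons a x ih =>
      intro S
      have : dRun ρ S (a :: x) = dRun ρ (dTrans ρ S a) x := rfl
      rw [this, ih]
      ext y
      simp [dTrans, nRun]

lemma langB_singleton {Q σ : Type*} (ρ : Q → σ → Set Q) (F : Set Q) (q : Q) :
    langB ρ F {q} = nfaLangFrom ρ F q := by
  ext x
  simp [langB, nfaLangFrom, dRun_eq_biUnion]

/-- the initial states of `B_min` (encoded via the delegate choice `sel`,
    one per language-equivalence class of the singleton initial states of `B`) are in
    bijection with the set of languages `{ L_B({q}) : q ∈ Q_N }`; hence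
    `|I^{B_min}| = |{ L_N(q) : q ∈ Q_N }|`. -/
theorem card_initial_min {σ QN : Type*} [Fintype QN]
    (ρ : QN → σ → Set QN) (F : Set QN) (sel : QN → QN)
    (hsel_equiv : ∀ q : QN, langB ρ F {sel q} = langB ρ F {q})
    (hsel_class : ∀ q q' : QN, langB ρ F ({q} : Set QN) = langB ρ F {q'} → sel q = sel q')
    (hsel_idem : ∀ q : QN, sel (sel q) = sel q) :
    Nat.card (Set.range fun q : QN => ({sel q} : Set QN)) =
      Nat.card (Set.range fun q : QN => langB ρ F ({q} : Set QN)) ∧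
    Nat.card (Set.range fun q : QN => ({sel q} : Set QN)) =
      Nat.card (Set.range fun q : QN => nfaLangFrom ρ F q) := by
  have hrange : (Set.range fun q : QN => langB ρ F ({q} : Set QN)) =
      Set.range fun q : QN => nfaLangFrom ρ F q := by
    ext L
    constructor
    · rintro ⟨q, rfl⟩; exact ⟨q, (langB_singleton ρ F q).symm⟩
    · rintro ⟨q, rfl⟩; exact ⟨q, langB_singleton ρ F q⟩
  have main : Nat.card (Set.range fun q : QN => ({sel q} : Set QN)) =
      Nat.card (Set.range fun q : QN => langB ρ F ({q} : Set QN)) := by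
    apply Nat.card_eq_of_bijective
      (fun s => ⟨langB ρ F s.1, by
        obtain ⟨q, hq⟩ := s.2
        exact ⟨q, by rw [← hq, hsel_equiv]⟩⟩)
    constructor
    · rintro ⟨s, q, rfl⟩ ⟨t, q', rfl⟩ h
      simp only [Subtype.mk.injEq] at h ⊢
      rw [hsel_equiv, hsel_equiv] at h
      exact Subtype.ext (show ({sel q} : Set QN) = {sel q'} by rw [hsel_class q q' h])
    · rintro ⟨L, q, rfl⟩
      exact ⟨⟨{sel q}, q, rfl⟩, by simp [hsel_equiv]⟩
  exact ⟨main, by rw [main, hrange]⟩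
end
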